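/- arXiv:2202.00079 — 2 statements merged into one kernel-verified Lean document; each statement's English description precedes it below -/
import Mathlib

section
/- Equality (Σ_a π(a)|π̃(a)/π(a) − 1|)² = 2 KL(π‖π̃) holds if and only if π̃(a) = π(a) for all a (both sides then being zero). -/
/-!
The left-hand side is `(∑ a, |πt a - π a|) ^ 2`, so this is the equality case of Pinsker's
inequality. With `x = π a / πt a`, the calculus inequality `3 (x - 1)² ≤ (2x + 4) klFun x`, strict
for `x ≠ 1`, combined with Cauchy–Schwarz in Sedrakyan's form for the weights `(2 π a + 4 πt a) / 3`
(which sum to `2`), gives `(∑ a, |π a - πt a|)² ≤ 2 ∑ a, πt a * klFun (π a / πt a) = 2 KL(π‖πt)`,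
strictly unless `π = πt`.
-/

open Finset InformationTheory

section Calculus

open Real Set

lemma strictMonoOn_add_one_mul_log_sub_two_mul :
    StrictMonoOn (fun x ↦ (x + 1) * log x - 2 * (x - 1)) (Ioi 0) := by
  have hderiv : ∀ x : ℝ, 0 < x →
      HasDerivAt (fun x ↦ (x + 1) * log x - 2 * (x - 1)) (log x - (1 - x⁻¹)) x := by
    intro x hx
    refine ((((hasDerivAt_id' x).add_const 1).mul (hasDerivAt_log hx.ne')).sub
      (((hasDerivAt_id' x).sub_const 1).const_mul 2)).congr_deriv ?_
    field_simp
    ring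
  -- the derivative vanishes only at `1`, so monotonicity is proved on each side of it
  have hpos : ∀ x : ℝ, 0 < x → x ≠ 1 → 0 < log x - (1 - x⁻¹) := fun x hx hx1 ↦ by
    have := log_lt_sub_one_of_pos (inv_pos.2 hx) (inv_ne_one.2 hx1)
    rw [log_inv] at this
    linarith
  have hcont : ContinuousOn (fun x ↦ (x + 1) * log x - 2 * (x - 1)) (Ioi 0) :=
    fun x hx ↦ (hderiv x hx).continuousAt.continuousWithinAt
  have hleft : StrictMonoOn (fun x ↦ (x + 1) * log x - 2 * (x - 1)) (Ioc 0 1) := by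
    refine strictMonoOn_of_hasDerivWithinAt_pos (convex_Ioc 0 1) (f' := fun x ↦ log x - (1 - x⁻¹))
      (hcont.mono Ioc_subset_Ioi_self) (fun x hx ↦ ?_) (fun x hx ↦ ?_) <;>
      rw [interior_Ioc] at hx
    · exact (hderiv x hx.1).hasDerivWithinAt
    · exact hpos x hx.1 hx.2.ne
  have hright : StrictMonoOn (fun x ↦ (x + 1) * log x - 2 * (x - 1)) (Ici 1) := by
    refine strictMonoOn_of_hasDerivWithinAt_pos (convex_Ici 1) (f' := fun x ↦ log x - (1 - x⁻¹))
      (hcont.mono fun x (hx : 1 ≤ x) ↦ zero_lt_one.trans_le hx) (fun x hx ↦ ?_) (fun x hx ↦ ?_) <;>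
      rw [interior_Ici] at hx
    · exact (hderiv x (zero_lt_one.trans hx)).hasDerivWithinAt
    · exact hpos x (zero_lt_one.trans hx) hx.ne'
  rw [← Ioc_union_Ici_eq_Ioi zero_lt_one]
  exact hleft.union hright (isGreatest_Ioc zero_lt_one) isLeast_Ici

lemma three_mul_sq_sub_one_lt_mul_klFun {x : ℝ} (hx : 0 ≤ x) (hx1 : x ≠ 1) :
    3 * (x - 1) ^ 2 < (2 * x + 4) * klFun x := by
  set g : ℝ → ℝ := fun x ↦ (x + 1) * log x - 2 * (x - 1) with hg
  set G : ℝ → ℝ := fun x ↦ (2 * x + 4) * klFun x - 3 * (x - 1) ^ 2 with hG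
  have hderiv : ∀ y : ℝ, 0 < y → HasDerivAt G (4 * g y) y := by
    intro y hy
    refine ((((hasDerivAt_id' y).const_mul 2).add_const 4).mul (hasDerivAt_klFun hy.ne')).sub
      ((((hasDerivAt_id' y).sub_const 1).pow 2).const_mul 3) |>.congr_deriv ?_
    rw [klFun_apply]
    ring
  have hcont : Continuous G := by fun_prop
  have hgmono : StrictMonoOn g (Ioi 0) := strictMonoOn_add_one_mul_log_sub_two_mul
  have hg1 : g 1 = 0 := by simp [hg]
  have hG1 : G 1 = 0 := by simp [hG, klFun_one]
  suffices 0 < G x by simpa [hG, sub_pos] using this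
  rw [← hG1]
  rcases hx1.lt_or_gt with hlt | hgt
  · have hanti : StrictAntiOn G (Icc 0 1) := by
      refine strictAntiOn_of_hasDerivWithinAt_neg (convex_Icc 0 1) (f' := fun y ↦ 4 * g y)
        hcont.continuousOn (fun y hy ↦ ?_) (fun y hy ↦ ?_) <;> rw [interior_Icc] at hy
      · exact (hderiv y hy.1).hasDerivWithinAt
      · have := hgmono hy.1 (mem_Ioi.2 zero_lt_one) hy.2
        linarith
    exact hanti ⟨hx, hlt.le⟩ ⟨zero_le_one, le_rfl⟩ hlt
  · have hmono : StrictMonoOn G (Ici 1) := by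
      refine strictMonoOn_of_hasDerivWithinAt_pos (convex_Ici 1) (f' := fun y ↦ 4 * g y)
        hcont.continuousOn (fun y hy ↦ ?_) (fun y hy ↦ ?_) <;> rw [interior_Ici] at hy
      · exact (hderiv y (zero_lt_one.trans hy)).hasDerivWithinAt
      · have := hgmono (mem_Ioi.2 zero_lt_one) (mem_Ioi.2 (zero_lt_one.trans hy)) hy
        linarith
    exact hmono self_mem_Ici hgt.le hgt

end Calculus

lemma three_mul_sq_sub_lt_mul_mul_klFun_div {p q : ℝ} (hp : 0 ≤ p) (hq : 0 < q) (hpq : p ≠ q) :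
    3 * (p - q) ^ 2 < (2 * p + 4 * q) * (q * klFun (p / q)) := by
  have key := three_mul_sq_sub_one_lt_mul_klFun (div_nonneg hp hq.le)
    (by rwa [ne_eq, div_eq_one_iff_eq hq.ne'])
  calc 3 * (p - q) ^ 2 = q ^ 2 * (3 * (p / q - 1) ^ 2) := by field_simp
    _ < q ^ 2 * ((2 * (p / q) + 4) * klFun (p / q)) := by gcongr
    _ = (2 * p + 4 * q) * (q * klFun (p / q)) := by field_simp

lemma three_mul_sq_sub_le_mul_mul_klFun_div {p q : ℝ} (hp : 0 ≤ p) (hq : 0 < q) :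
    3 * (p - q) ^ 2 ≤ (2 * p + 4 * q) * (q * klFun (p / q)) := by
  rcases eq_or_ne p q with rfl | hpq
  · simp [div_self hq.ne', klFun_one]
  · exact (three_mul_sq_sub_lt_mul_mul_klFun_div hp hq hpq).le

lemma sum_mul_klFun_div_eq_sum_mul_log {ι : Type*} [Fintype ι] {p q : ι → ℝ}
    (hq : ∀ i, q i ≠ 0) (hpq : ∑ i, p i = ∑ i, q i) :
    ∑ i, q i * klFun (p i / q i) = ∑ i, p i * Real.log (p i / q i) := by
  have hterm (i : ι) : q i * klFun (p i / q i) = p i * Real.log (p i / q i) + (q i - p i) := by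
    rw [klFun_apply, mul_sub, mul_add, ← mul_assoc, mul_div_cancel₀ _ (hq i), mul_one]
    ring
  simp only [hterm, sum_add_distrib, sum_sub_distrib, hpq, sub_self, add_zero]

theorem sq_sum_abs_sub_lt_two_mul_sum_mul_klFun_div {ι : Type*} [Fintype ι] {p q : ι → ℝ}
    (hp : ∀ i, 0 ≤ p i) (hq : ∀ i, 0 < q i) (hp1 : ∑ i, p i = 1) (hq1 : ∑ i, q i = 1)
    (hpq : p ≠ q) :
    (∑ i, |p i - q i|) ^ 2 < 2 * ∑ i, q i * klFun (p i / q i) := by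
  set w : ι → ℝ := fun i ↦ (2 * p i + 4 * q i) / 3 with hw
  have hw_pos : ∀ i ∈ univ, 0 < w i := fun i _ ↦ by
    have := hp i; have := hq i
    positivity
  have hw_sum : ∑ i, w i = 2 := by
    simp only [hw, ← sum_div, sum_add_distrib, ← mul_sum, hp1, hq1]
    norm_num
  have hterm : ∀ i, |p i - q i| ^ 2 / w i ≤ q i * klFun (p i / q i) := fun i ↦ by
    rw [sq_abs, div_le_iff₀ (hw_pos i (mem_univ i)), hw]
    linarith [three_mul_sq_sub_le_mul_mul_klFun_div (hp i) (hq i)]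
  obtain ⟨j, hj⟩ := Function.ne_iff.1 hpq
  have hterm_j : |p j - q j| ^ 2 / w j < q j * klFun (p j / q j) := by
    rw [sq_abs, div_lt_iff₀ (hw_pos j (mem_univ j)), hw]
    linarith [three_mul_sq_sub_lt_mul_mul_klFun_div (hp j) (hq j) hj]
  calc (∑ i, |p i - q i|) ^ 2 = 2 * ((∑ i, |p i - q i|) ^ 2 / ∑ i, w i) := by
        rw [hw_sum]; ring
    _ ≤ 2 * ∑ i, |p i - q i| ^ 2 / w i := by gcongr; exact sq_sum_div_le_sum_sq_div _ _ hw_pos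
    _ < 2 * ∑ i, q i * klFun (p i / q i) := by
        refine mul_lt_mul_of_pos_left ?_ two_pos
        exact sum_lt_sum (fun i _ ↦ hterm i) ⟨j, mem_univ j, hterm_j⟩

lemma mul_abs_div_sub_one {u : ℝ} (v : ℝ) (hu : 0 < u) : u * |v / u - 1| = |v - u| := by
  calc u * |v / u - 1| = |u * (v / u - 1)| := by rw [abs_mul, abs_of_pos hu]
    _ = |v - u| := by rw [mul_sub, mul_div_cancel₀ _ hu.ne', mul_one]

theorem sq_expected_ratio_deviation_eq_two_kl_iff {A : Type*} [Fintype A] (π πt : A → ℝ)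
    (hπpos : ∀ a, 0 < π a) (hπtpos : ∀ a, 0 < πt a)
    (hπ1 : ∑ a, π a = 1) (hπt1 : ∑ a, πt a = 1) :
    (∑ a, π a * |πt a / π a - 1|) ^ 2 = 2 * ∑ a, π a * Real.log (π a / πt a) ↔
      ∀ a, πt a = π a := by
  constructor
  · intro heq
    by_contra hne
    have hlt := sq_sum_abs_sub_lt_two_mul_sum_mul_klFun_div (fun a ↦ (hπpos a).le) hπtpos hπ1
      hπt1 fun h ↦ hne fun a ↦ (congrFun h a).symm
    rw [sum_mul_klFun_div_eq_sum_mul_log (fun a ↦ (hπtpos a).ne') (hπ1.trans hπt1.symm)] at hlt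
    simp only [mul_abs_div_sub_one _ (hπpos _), abs_sub_comm (πt _)] at heq
    exact hlt.ne heq
  · intro h
    simp [h, (hπpos _).ne']
end

section
/- Discounted state distribution difference bound: for policies π, π̃ on a finite MDP with discount γ ∈ [0,1), the discounted state distributions d_π = (1−γ)(I − γ P_πᵀ)⁻¹ p₀ and d_π̃ satisfy ‖d_π̃ − d_π‖₁ ≤ (γ/(1−γ)) · E_{s∼d_π, a∼π(·|s)} |π̃(a|s)/π(a|s) − 1|. -/
open scoped BigOperators

/-- State transition matrix induced by policy `π`: `(Pmat P π) s s' = ∑ a, π s a * P s a s'`. -/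
noncomputable def Pmat {S A : Type*} [Fintype A] (P : S → A → S → ℝ) (π : S → A → ℝ) :
    Matrix S S ℝ := fun s s' => ∑ a, π s a * P s a s'

/-- State distribution at time `t` when starting from `p0` and following `π`. -/
noncomputable def stateDist {S A : Type*} [Fintype S] [DecidableEq S] [Fintype A]
    (P : S → A → S → ℝ) (π : S → A → ℝ) (p0 : S → ℝ) (t : ℕ) : S → ℝ :=
  (((Pmat P π).transpose) ^ t).mulVec p0

/-- Discounted state distribution `d_π(s) = (1-γ) ∑ γ^t Pr(s_t = s)`. -/
noncomputable def dDist {S A : Type*} [Fintype S] [DecidableEq S] [Fintype A]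
    (P : S → A → S → ℝ) (π : S → A → ℝ) (p0 : S → ℝ) (γ : ℝ) (s : S) : ℝ :=
  (1 - γ) * ∑' t : ℕ, γ ^ t * stateDist P π p0 t s

/-- Expected discounted return `J(π)` with initial distribution `p0`. -/
noncomputable def Jret {S A : Type*} [Fintype S] [DecidableEq S] [Fintype A]
    (P : S → A → S → ℝ) (π : S → A → ℝ) (r : S → A → ℝ) (p0 : S → ℝ) (γ : ℝ) : ℝ :=
  ∑' t : ℕ, γ ^ t * ∑ s, stateDist P π p0 t s * ∑ a, π s a * r s a

/-- Value function `V_π(s)`: return starting deterministically from `s`. -/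
noncomputable def Vval {S A : Type*} [Fintype S] [Fintype A] [DecidableEq S]
    (P : S → A → S → ℝ) (π : S → A → ℝ) (r : S → A → ℝ) (γ : ℝ) (s : S) : ℝ :=
  Jret P π r (fun s' => if s' = s then 1 else 0) γ

/-- Action-value function `Q_π(s,a)`. -/
noncomputable def Qval {S A : Type*} [Fintype S] [Fintype A] [DecidableEq S]
    (P : S → A → S → ℝ) (π : S → A → ℝ) (r : S → A → ℝ) (γ : ℝ) (s : S) (a : A) : ℝ :=
  r s a + γ * ∑ s', P s a s' * Vval P π r γ s'

/-- Advantage function `A_π(s,a) = Q_π(s,a) - V_π(s)`. -/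
noncomputable def Adv {S A : Type*} [Fintype S] [Fintype A] [DecidableEq S]
    (P : S → A → S → ℝ) (π : S → A → ℝ) (r : S → A → ℝ) (γ : ℝ) (s : S) (a : A) : ℝ :=
  Qval P π r γ s a - Vval P π r γ s

open Matrix Finset

/-! `d_π` is the fixed point of `d = (1 - γ) p₀ + γ d P_π` (read `d` as a row vector). Subtracting
the equations for `π̃` and `π` gives `d_π̃ - d_π = γ (d_π̃ - d_π) P_π̃ + γ d_π (P_π̃ - P_π)`.
Right multiplication by the row-stochastic `P_π̃` does not increase the `ℓ¹` norm, so
`(1 - γ) ‖d_π̃ - d_π‖₁ ≤ γ ‖d_π (P_π̃ - P_π)‖₁ ≤ γ ∑ₛ d_π(s) ∑ₐ |π̃(a|s) - π(a|s)|`. -/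

namespace Matrix

variable {n : Type*} [Fintype n] [DecidableEq n] {M N : Matrix n n ℝ}

lemma sum_abs_vecMul_le_of_mem_rowStochastic (hM : M ∈ rowStochastic ℝ n) (x : n → ℝ) :
    ∑ j, |(x ᵥ* M) j| ≤ ∑ i, |x i| :=
  calc ∑ j, |(x ᵥ* M) j| ≤ ∑ j, ∑ i, |x i| * M i j := by
        refine sum_le_sum fun j _ => (abs_sum_le_sum_abs _ _).trans_eq (sum_congr rfl fun i _ => ?_)
        rw [abs_mul, abs_of_nonneg (nonneg_of_mem_rowStochastic hM)]
    _ = ∑ i, |x i| := by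
        rw [sum_comm]
        simp only [← mul_sum, sum_row_of_mem_rowStochastic hM, mul_one]

lemma abs_vecMul_le_of_mem_rowStochastic (hM : M ∈ rowStochastic ℝ n) (x : n → ℝ) (j : n) :
    |(x ᵥ* M) j| ≤ ∑ i, |x i| :=
  (single_le_sum (f := fun j => |(x ᵥ* M) j|) (fun _ _ => abs_nonneg _) (mem_univ j)).trans
    (sum_abs_vecMul_le_of_mem_rowStochastic hM x)

lemma one_sub_mul_sum_abs_sub_le_of_eq_add_vecMul (hN : N ∈ rowStochastic ℝ n) {γ : ℝ}
    (hγ : 0 ≤ γ) {p x y : n → ℝ} (hx : x = (1 - γ) • p + γ • (x ᵥ* M))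
    (hy : y = (1 - γ) • p + γ • (y ᵥ* N)) :
    (1 - γ) * ∑ i, |y i - x i| ≤ γ * ∑ i, |(x ᵥ* (N - M)) i| := by
  have hyx : y - x = γ • ((y - x) ᵥ* N + x ᵥ* (N - M)) := by
    conv_lhs => rw [hy, hx]
    rw [sub_vecMul, vecMul_sub]
    module
  have hle : ∑ i, |y i - x i| ≤ γ * ∑ i, |y i - x i| + γ * ∑ i, |(x ᵥ* (N - M)) i| :=
    calc ∑ i, |y i - x i| = ∑ i, γ * |((y - x) ᵥ* N) i + (x ᵥ* (N - M)) i| := by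
          refine sum_congr rfl fun i _ => ?_
          rw [← Pi.sub_apply y x, congrFun hyx i]
          simp only [Pi.smul_apply, Pi.add_apply, smul_eq_mul, abs_mul, abs_of_nonneg hγ]
      _ ≤ ∑ i, (γ * |((y - x) ᵥ* N) i| + γ * |(x ᵥ* (N - M)) i|) :=
          sum_le_sum fun i _ => by rw [← mul_add]; exact mul_le_mul_of_nonneg_left (abs_add_le _ _) hγ
      _ ≤ γ * ∑ i, |y i - x i| + γ * ∑ i, |(x ᵥ* (N - M)) i| := by
          rw [sum_add_distrib, ← mul_sum, ← mul_sum]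
          have := sum_abs_vecMul_le_of_mem_rowStochastic hN (y - x)
          simp only [Pi.sub_apply] at this
          linarith [mul_le_mul_of_nonneg_left this hγ]
  linarith

end Matrix

section MDP

variable {S A : Type*} [Fintype A] {P : S → A → S → ℝ}

lemma Pmat_sub (π π' : S → A → ℝ) : Pmat P (π - π') = Pmat P π - Pmat P π' := by
  ext s s'
  simp only [Pmat, Matrix.sub_apply, Pi.sub_apply, sub_mul, sum_sub_distrib]

variable [Fintype S]

lemma sum_abs_vecMul_Pmat_le (hP0 : ∀ s a s', 0 ≤ P s a s') (hP1 : ∀ s a, ∑ s', P s a s' = 1)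
    {x : S → ℝ} (hx : 0 ≤ x) (σ : S → A → ℝ) :
    ∑ s', |(x ᵥ* Pmat P σ) s'| ≤ ∑ s, x s * ∑ a, |σ s a| :=
  calc ∑ s', |(x ᵥ* Pmat P σ) s'| ≤ ∑ s', ∑ s, ∑ a, x s * |σ s a| * P s a s' := by
        refine sum_le_sum fun s' _ => (abs_sum_le_sum_abs _ _).trans (sum_le_sum fun s _ => ?_)
        calc |x s * Pmat P σ s s'| = x s * |∑ a, σ s a * P s a s'| := by
              rw [abs_mul, abs_of_nonneg (hx s)]; rfl
          _ ≤ x s * ∑ a, |σ s a| * P s a s' := by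
              refine mul_le_mul_of_nonneg_left ((abs_sum_le_sum_abs _ _).trans_eq
                (sum_congr rfl fun a _ => ?_)) (hx s)
              rw [abs_mul, abs_of_nonneg (hP0 s a s')]
          _ = ∑ a, x s * |σ s a| * P s a s' := by simp only [mul_sum, mul_assoc]
    _ = ∑ s, x s * ∑ a, |σ s a| := by
        rw [sum_comm]
        refine sum_congr rfl fun s _ => ?_
        rw [sum_comm, mul_sum]
        simp only [← mul_sum, hP1, mul_one]

variable [DecidableEq S]

lemma Pmat_mem_rowStochastic (hP0 : ∀ s a s', 0 ≤ P s a s') (hP1 : ∀ s a, ∑ s', P s a s' = 1)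
    {π : S → A → ℝ} (hπ0 : ∀ s a, 0 ≤ π s a) (hπ1 : ∀ s, ∑ a, π s a = 1) :
    Pmat P π ∈ rowStochastic ℝ S := by
  refine mem_rowStochastic_iff_sum.2
    ⟨fun s s' => sum_nonneg fun a _ => mul_nonneg (hπ0 s a) (hP0 s a s'), fun s => ?_⟩
  simp only [Pmat]
  rw [sum_comm]
  simp only [← mul_sum, hP1, mul_one, hπ1]

variable (P) (π : S → A → ℝ) (p0 : S → ℝ) {γ : ℝ}

lemma stateDist_eq_vecMul (t : ℕ) : stateDist P π p0 t = p0 ᵥ* Pmat P π ^ t := by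
  rw [stateDist, ← transpose_pow, mulVec_transpose]

lemma stateDist_succ (t : ℕ) : stateDist P π p0 (t + 1) = stateDist P π p0 t ᵥ* Pmat P π := by
  simp only [stateDist_eq_vecMul, pow_succ, vecMul_vecMul]

variable {P π}

lemma summable_stateDist (hM : Pmat P π ∈ rowStochastic ℝ S) (hγ0 : 0 ≤ γ) (hγ1 : γ < 1)
    (s : S) : Summable fun t : ℕ => γ ^ t * stateDist P π p0 t s := by
  refine Summable.of_norm_bounded ((summable_geometric_of_lt_one hγ0 hγ1).mul_left (∑ i, |p0 i|))
    fun t => ?_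
  rw [norm_mul, norm_pow, Real.norm_of_nonneg hγ0, Real.norm_eq_abs, mul_comm, stateDist_eq_vecMul]
  exact mul_le_mul_of_nonneg_right
    (abs_vecMul_le_of_mem_rowStochastic (pow_mem hM t) p0 s) (pow_nonneg hγ0 t)

lemma dDist_eq (hM : Pmat P π ∈ rowStochastic ℝ S) (hγ0 : 0 ≤ γ) (hγ1 : γ < 1) :
    dDist P π p0 γ = (1 - γ) • p0 + γ • (dDist P π p0 γ ᵥ* Pmat P π) := by
  set D : S → ℝ := fun s => ∑' t : ℕ, γ ^ t * stateDist P π p0 t s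
  have hsum := summable_stateDist p0 hM hγ0 hγ1
  have hshift (s : S) : D s = p0 s + γ * ∑ s', D s' * Pmat P π s' s :=
    calc D s = γ ^ 0 * stateDist P π p0 0 s
          + ∑' t : ℕ, γ ^ (t + 1) * stateDist P π p0 (t + 1) s := (hsum s).tsum_eq_zero_add
      _ = p0 s + ∑' t : ℕ, γ * ∑ s', γ ^ t * stateDist P π p0 t s' * Pmat P π s' s := by
          simp only [stateDist_succ, pow_zero, one_mul, vecMul, dotProduct, mul_sum, pow_succ]
          simp [stateDist_eq_vecMul, mul_assoc, mul_left_comm]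
      _ = p0 s + γ * ∑ s', D s' * Pmat P π s' s := by
          rw [tsum_mul_left, Summable.tsum_finsetSum fun s' _ => (hsum s').mul_right _]
          simp only [D, tsum_mul_right]
  ext s
  change (1 - γ) * D s = (1 - γ) * p0 s + γ * ∑ s', (1 - γ) * D s' * Pmat P π s' s
  rw [hshift s, mul_add, mul_left_comm, mul_sum]
  congr 2
  exact sum_congr rfl fun s' _ => by ring

lemma dDist_nonneg (hM : Pmat P π ∈ rowStochastic ℝ S) (hγ0 : 0 ≤ γ) (hγ1 : γ ≤ 1)
    (hp0 : 0 ≤ p0) : 0 ≤ dDist P π p0 γ := fun s =>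
  mul_nonneg (sub_nonneg.2 hγ1) <| tsum_nonneg fun t => mul_nonneg (pow_nonneg hγ0 t) <| by
    rw [stateDist_eq_vecMul]
    exact nonneg_vecMul_of_mem_rowStochastic (pow_mem hM t) hp0 s

end MDP

theorem discounted_state_distribution_difference_bound_general {S A : Type*}
    [Fintype S] [DecidableEq S] [Fintype A] (P : S → A → S → ℝ) (π πt : S → A → ℝ) (p0 : S → ℝ) (γ : ℝ)
    (hγ0 : 0 ≤ γ) (hγ1 : γ < 1)
    (hP0 : ∀ s a s', 0 ≤ P s a s') (hP1 : ∀ s a, ∑ s', P s a s' = 1)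
    (hπpos : ∀ s a, 0 < π s a) (hπ1 : ∀ s, ∑ a, π s a = 1)
    (hπt0 : ∀ s a, 0 ≤ πt s a) (hπt1 : ∀ s, ∑ a, πt s a = 1)
    (hp00 : ∀ s, 0 ≤ p0 s) :
    ∑ s, |dDist P πt p0 γ s - dDist P π p0 γ s| ≤
      (γ / (1 - γ)) * ∑ s, ∑ a, dDist P π p0 γ s * π s a * |πt s a / π s a - 1| := by
  have hM := Pmat_mem_rowStochastic hP0 hP1 (fun s a => (hπpos s a).le) hπ1
  have hMt := Pmat_mem_rowStochastic hP0 hP1 hπt0 hπt1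
  have hd := dDist_nonneg p0 hM hγ0 hγ1.le hp00
  have hfixed := one_sub_mul_sum_abs_sub_le_of_eq_add_vecMul hMt hγ0
    (dDist_eq p0 hM hγ0 hγ1) (dDist_eq p0 hMt hγ0 hγ1)
  have hperturb := sum_abs_vecMul_Pmat_le hP0 hP1 hd (πt - π)
  have hratio (s : S) (a : A) : π s a * |πt s a / π s a - 1| = |πt s a - π s a| := by
    have hπ := hπpos s a
    rw [show πt s a - π s a = π s a * (πt s a / π s a - 1) by field_simp, abs_mul, abs_of_pos hπ]
  simp only [mul_assoc, hratio, ← mul_sum]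
  rw [← Pmat_sub] at hfixed
  rw [div_mul_eq_mul_div, le_div_iff₀ (sub_pos.2 hγ1), mul_comm]
  exact hfixed.trans (mul_le_mul_of_nonneg_left hperturb hγ0)

theorem discounted_state_distribution_difference_bound {S A : Type*}
    [Fintype S] [DecidableEq S] [Fintype A] (P : S → A → S → ℝ) (π πt : S → A → ℝ) (p0 : S → ℝ) (γ : ℝ)
    (hγ0 : 0 ≤ γ) (hγ1 : γ < 1)
    (hP0 : ∀ s a s', 0 ≤ P s a s') (hP1 : ∀ s a, ∑ s', P s a s' = 1)
    (hπpos : ∀ s a, 0 < π s a) (hπ1 : ∀ s, ∑ a, π s a = 1)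
    (hπt0 : ∀ s a, 0 ≤ πt s a) (hπt1 : ∀ s, ∑ a, πt s a = 1)
    (hp00 : ∀ s, 0 ≤ p0 s) (hp01 : ∑ s, p0 s = 1) :
    ∑ s, |dDist P πt p0 γ s - dDist P π p0 γ s| ≤
      (γ / (1 - γ)) * ∑ s, ∑ a, dDist P π p0 γ s * π s a * |πt s a / π s a - 1| :=
  discounted_state_distribution_difference_bound_general P π πt p0 γ hγ0 hγ1 hP0 hP1 hπpos hπ1 hπt0
    hπt1 hp00
end
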